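/- Let four distinct vertices u, v, w, x be placed in a uniformly random linear arrangement of n ≥ 4 positions, and let d_i = |π(u) - π(v)| and d_j = |π(w) - π(x)| be the lengths of the two disjoint edges {u,v} and {w,x}. Then E[d_i d_j] = (n+1)(5n+4)/45. -/
import Mathlib
open Finset

lemma pow1 (n : ℕ) : ∑ i ∈ range n, (i:ℚ) = n*(n-1)/2 := by
  induction n with
  | zero => simp
  | succ m ih => rw [sum_range_succ, ih]; push_cast; ring

lemma pow2 (n : ℕ) : ∑ i ∈ range n, (i:ℚ)^2 = n*(n-1)*(2*n-1)/6 := by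
  induction n with
  | zero => simp
  | succ m ih => rw [sum_range_succ, ih]; push_cast; ring

lemma pow3 (n : ℕ) : ∑ i ∈ range n, (i:ℚ)^3 = n^2*(n-1)^2/4 := by
  induction n with
  | zero => simp
  | succ m ih => rw [sum_range_succ, ih]; push_cast; ring

lemma pow4 (n : ℕ) : ∑ i ∈ range n, (i:ℚ)^4 = n*(n-1)*(2*n-1)*(3*n^2-3*n-1)/30 := by
  induction n with
  | zero => simp
  | succ m ih => rw [sum_range_succ, ih]; push_cast; ring

lemma Rclosed (n a : ℕ) (h : a < n) :
    ∑ j ∈ range n, |(a:ℚ) - (j:ℚ)| = (a:ℚ)^2 + a - n*a + ((n:ℚ)^2-n)/2 := by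
  obtain ⟨m, rfl⟩ : ∃ m, n = a + m := ⟨n - a, by omega⟩
  rw [range_eq_Ico, ← Finset.sum_Ico_consecutive _ (Nat.zero_le a) (Nat.le_add_right a m),
    ← range_eq_Ico]
  have h1 : ∑ j ∈ range a, |(a:ℚ) - (j:ℚ)| = ∑ j ∈ range a, ((a:ℚ) - j) := by
    refine Finset.sum_congr rfl fun j hj => ?_
    rw [abs_of_nonneg]
    have := (mem_range.mp hj).le
    have : (j:ℚ) ≤ a := by exact_mod_cast this
    linarith
  have h2 : ∑ j ∈ Finset.Ico a (a+m), |(a:ℚ) - (j:ℚ)| = ∑ j ∈ Finset.Ico a (a+m), ((j:ℚ) - a) := by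
    refine Finset.sum_congr rfl fun j hj => ?_
    rw [abs_sub_comm, abs_of_nonneg]
    have := (Finset.mem_Ico.mp hj).1
    have : (a:ℚ) ≤ j := by exact_mod_cast this
    linarith
  rw [h1, h2, Finset.sum_sub_distrib, Finset.sum_sub_distrib, Finset.sum_const,
    Finset.sum_const, Finset.sum_Ico_eq_sum_range]
  simp only [add_tsub_cancel_left, Nat.card_Ico, card_range, nsmul_eq_mul]
  push_cast
  rw [Finset.sum_add_distrib, Finset.sum_const, pow1, pow1, card_range]
  push_cast
  ring

lemma Aclosed (n : ℕ) :
    ∑ i ∈ range n, ∑ j ∈ range n, |(i:ℚ) - (j:ℚ)| = ((n:ℚ)^3 - n)/3 := by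
  rw [Finset.sum_congr rfl fun i hi => Rclosed n i (mem_range.mp hi)]
  simp only [Finset.sum_add_distrib, Finset.sum_sub_distrib, ← Finset.mul_sum,
    Finset.sum_const, card_range, nsmul_eq_mul]
  rw [pow1, pow2]
  ring

lemma Bclosed (n : ℕ) :
    ∑ a ∈ range n, (∑ j ∈ range n, |(a:ℚ) - (j:ℚ)|)^2
      = (7*(n:ℚ)^5 - 15*(n:ℚ)^3 + 8*n)/60 := by
  rw [Finset.sum_congr rfl fun a ha => by rw [Rclosed n a (mem_range.mp ha)]]
  have point : ∀ a : ℚ, ((a:ℚ)^2 + a - n*a + ((n:ℚ)^2-n)/2)^2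
      = a^4 + (2-2*(n:ℚ))*a^3 + (2*(n:ℚ)^2-3*n+1)*a^2
        + (-(n:ℚ)^3+2*n^2-n)*a + ((n:ℚ)^2-n)^2/4 := by
    intro a; ring
  simp only [point]
  simp only [Finset.sum_add_distrib, ← Finset.mul_sum, Finset.sum_const, card_range,
    nsmul_eq_mul]
  rw [pow1, pow2, pow3, pow4]
  ring

lemma Cclosed (n : ℕ) :
    ∑ i ∈ range n, ∑ j ∈ range n, ((i:ℚ) - (j:ℚ))^2 = (n:ℚ)^2*((n:ℚ)^2-1)/6 := by
  have inner : ∀ i : ℕ, ∑ j ∈ range n, ((i:ℚ) - (j:ℚ))^2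
      = (i:ℚ)^2*n - (i:ℚ)*((n:ℚ)*(↑n-1)) + ↑n*(↑n-1)*(2*↑n-1)/6 := by
    intro i
    have point : ∀ j : ℕ, ((i:ℚ) - (j:ℚ))^2
        = ((i:ℚ)^2 - (2*(i:ℚ))*(j:ℚ)) + (j:ℚ)^2 := fun j => by ring
    simp only [point]
    simp only [Finset.sum_add_distrib, Finset.sum_sub_distrib, ← Finset.mul_sum,
      Finset.sum_const, card_range, nsmul_eq_mul]
    rw [pow1, pow2]
    ring
  simp only [inner]
  simp only [Finset.sum_add_distrib, Finset.sum_sub_distrib, ← Finset.sum_mul,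
    Finset.sum_const, card_range, nsmul_eq_mul]
  rw [pow1, pow2]
  ring


section
variable {ι : Type*} [Fintype ι] [DecidableEq ι]

omit [Fintype ι] in
lemma pointwise_ie (f : ι → ι → ℚ) (hz : ∀ a, f a a = 0) (a b c d : ι) :
    (if (a ≠ b ∧ a ≠ c ∧ a ≠ d ∧ b ≠ c ∧ b ≠ d ∧ c ≠ d) then f a b * f c d else 0)
    = f a b * f c d - (if a = c then f a b * f c d else 0)
      - (if a = d then f a b * f c d else 0)
      - (if b = c then f a b * f c d else 0)
      - (if b = d then f a b * f c d else 0)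
      + (if a = c ∧ b = d then f a b * f c d else 0)
      + (if a = d ∧ b = c then f a b * f c d else 0) := by
  by_cases hab : a = b <;> by_cases hcd : c = d <;> by_cases hac : a = c <;>
    by_cases had : a = d <;> by_cases hbc : b = c <;> by_cases hbd : b = d <;>
    simp_all [hz]

lemma sum_distinct (f : ι → ι → ℚ) (hz : ∀ a, f a a = 0) (hs : ∀ a b, f a b = f b a) :
    ∑ t ∈ (univ.filter fun t : ι × ι × ι × ι =>
        t.1 ≠ t.2.1 ∧ t.1 ≠ t.2.2.1 ∧ t.1 ≠ t.2.2.2 ∧ t.2.1 ≠ t.2.2.1 ∧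
        t.2.1 ≠ t.2.2.2 ∧ t.2.2.1 ≠ t.2.2.2),
      f t.1 t.2.1 * f t.2.2.1 t.2.2.2
    = (∑ a, ∑ b, f a b)^2 - 4 * ∑ a, (∑ b, f a b)^2 + 2 * ∑ a, ∑ b, (f a b)^2 := by
  rw [Finset.sum_filter]
  simp only [Fintype.sum_prod_type]
  simp only [pointwise_ie f hz]
  simp only [Finset.sum_sub_distrib, Finset.sum_add_distrib]
  have T1 : ∑ a, ∑ b, ∑ c, ∑ d : ι, f a b * f c d = (∑ a, ∑ b, f a b)^2 := by
    simp only [← Finset.mul_sum]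
    simp only [← Finset.sum_mul]
    rw [sq]
  have TAC : ∑ a, ∑ b, ∑ c, ∑ d : ι, (if a = c then f a b * f c d else 0)
      = ∑ a, (∑ b, f a b)^2 := by
    simp only [Finset.sum_ite_irrel, Finset.sum_const_zero, Finset.sum_ite_eq,
      mem_univ, if_true]
    refine Finset.sum_congr rfl fun a _ => ?_
    rw [sq, Finset.sum_mul_sum]
  have TAD : ∑ a, ∑ b, ∑ c, ∑ d : ι, (if a = d then f a b * f c d else 0)
      = ∑ a, (∑ b, f a b)^2 := by
    simp only [Finset.sum_ite_eq, mem_univ, if_true]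
    refine Finset.sum_congr rfl fun a _ => ?_
    calc ∑ b, ∑ c, f a b * f c a = ∑ b, ∑ c, f a b * f a c :=
          Finset.sum_congr rfl fun b _ => Finset.sum_congr rfl fun c _ => by rw [hs c a]
      _ = (∑ b, f a b) * (∑ c, f a c) := (Finset.sum_mul_sum _ _ _ _).symm
      _ = (∑ b, f a b)^2 := (sq _).symm
  have TBC : ∑ a, ∑ b, ∑ c, ∑ d : ι, (if b = c then f a b * f c d else 0)
      = ∑ a, (∑ b, f a b)^2 := by
    simp only [Finset.sum_ite_irrel, Finset.sum_const_zero, Finset.sum_ite_eq,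
      mem_univ, if_true]
    rw [Finset.sum_comm]
    refine Finset.sum_congr rfl fun y _ => ?_
    calc ∑ x, ∑ z, f x y * f y z = (∑ x, f x y) * (∑ z, f y z) :=
          (Finset.sum_mul_sum _ _ _ _).symm
      _ = (∑ x, f y x) * (∑ z, f y z) := by
          rw [Finset.sum_congr rfl fun x _ => hs x y]
      _ = (∑ b, f y b)^2 := (sq _).symm
  have TBD : ∑ a, ∑ b, ∑ c, ∑ d : ι, (if b = d then f a b * f c d else 0)
      = ∑ a, (∑ b, f a b)^2 := by
    simp only [Finset.sum_ite_eq, mem_univ, if_true]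
    rw [Finset.sum_comm]
    refine Finset.sum_congr rfl fun y _ => ?_
    calc ∑ x, ∑ z, f x y * f z y = (∑ x, f x y) * (∑ z, f z y) :=
          (Finset.sum_mul_sum _ _ _ _).symm
      _ = (∑ x, f y x) * (∑ z, f y z) := by
          rw [Finset.sum_congr rfl fun x _ => hs x y]
      _ = (∑ b, f y b)^2 := (sq _).symm
  have TACBD : ∑ a, ∑ b, ∑ c, ∑ d : ι, (if a = c ∧ b = d then f a b * f c d else 0)
      = ∑ a, ∑ b, (f a b)^2 := by
    simp only [ite_and, Finset.sum_ite_irrel, Finset.sum_const_zero, Finset.sum_ite_eq,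
      mem_univ, if_true]
    exact Finset.sum_congr rfl fun a _ => Finset.sum_congr rfl fun b _ => (sq _).symm
  have TADBC : ∑ a, ∑ b, ∑ c, ∑ d : ι, (if a = d ∧ b = c then f a b * f c d else 0)
      = ∑ a, ∑ b, (f a b)^2 := by
    simp only [ite_and, Finset.sum_ite_irrel, Finset.sum_const_zero, Finset.sum_ite_eq,
      mem_univ, if_true]
    refine Finset.sum_congr rfl fun a _ => Finset.sum_congr rfl fun b _ => ?_
    rw [hs b a, sq]
  rw [T1, TAC, TAD, TBC, TBD, TACBD, TADBC]
  ring

end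


section
variable {n : ℕ}

lemma exists_perm_extend (u v w x : Fin n) (huv : u ≠ v) (huw : u ≠ w) (hux : u ≠ x)
    (hvw : v ≠ w) (hvx : v ≠ x) (hwx : w ≠ x) (a b c d : Fin n) (hab : a ≠ b)
    (hac : a ≠ c) (had : a ≠ d) (hbc : b ≠ c) (hbd : b ≠ d) (hcd : c ≠ d) :
    ∃ π : Equiv.Perm (Fin n), π u = a ∧ π v = b ∧ π w = c ∧ π x = d := by
  set π₁ : Equiv.Perm (Fin n) := Equiv.swap u a with hπ₁
  have h1u : π₁ u = a := Equiv.swap_apply_left _ _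
  set π₂ : Equiv.Perm (Fin n) := Equiv.swap (π₁ v) b * π₁ with hπ₂
  have h2v : π₂ v = b := by
    rw [hπ₂, Equiv.Perm.mul_apply, Equiv.swap_apply_left]
  have h2u : π₂ u = a := by
    rw [hπ₂, Equiv.Perm.mul_apply, h1u,
      Equiv.swap_apply_of_ne_of_ne (h1u ▸ π₁.injective.ne huv).symm.symm hab]
  set π₃ : Equiv.Perm (Fin n) := Equiv.swap (π₂ w) c * π₂ with hπ₃
  have h3w : π₃ w = c := by
    rw [hπ₃, Equiv.Perm.mul_apply, Equiv.swap_apply_left]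
  have h3u : π₃ u = a := by
    rw [hπ₃, Equiv.Perm.mul_apply, h2u,
      Equiv.swap_apply_of_ne_of_ne (h2u ▸ π₂.injective.ne huw) hac]
  have h3v : π₃ v = b := by
    rw [hπ₃, Equiv.Perm.mul_apply, h2v,
      Equiv.swap_apply_of_ne_of_ne (h2v ▸ π₂.injective.ne hvw) hbc]
  refine ⟨Equiv.swap (π₃ x) d * π₃, ?_, ?_, ?_, ?_⟩
  · rw [Equiv.Perm.mul_apply, h3u,
      Equiv.swap_apply_of_ne_of_ne (h3u ▸ π₃.injective.ne hux) had]
  · rw [Equiv.Perm.mul_apply, h3v,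
      Equiv.swap_apply_of_ne_of_ne (h3v ▸ π₃.injective.ne hvx) hbd]
  · rw [Equiv.Perm.mul_apply, h3w,
      Equiv.swap_apply_of_ne_of_ne (h3w ▸ π₃.injective.ne hwx) hcd]
  · rw [Equiv.Perm.mul_apply, Equiv.swap_apply_left]

lemma fiber_card_eq (u v w x : Fin n) (t t' : Fin n × Fin n × Fin n × Fin n)
    (ht : ∃ π : Equiv.Perm (Fin n), (π u, π v, π w, π x) = t)
    (ht' : ∃ π : Equiv.Perm (Fin n), (π u, π v, π w, π x) = t') :
    (univ.filter fun π : Equiv.Perm (Fin n) => (π u, π v, π w, π x) = t).card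
      = (univ.filter fun π : Equiv.Perm (Fin n) => (π u, π v, π w, π x) = t').card := by
  obtain ⟨π₀, hπ₀⟩ := ht
  obtain ⟨π₁, hπ₁⟩ := ht'
  subst hπ₀; subst hπ₁
  refine Finset.card_bij' (fun π _ => (π₁ * π₀⁻¹) * π) (fun π _ => (π₀ * π₁⁻¹) * π)
    ?_ ?_ ?_ ?_
  · intro π hπ
    simp only [mem_filter, mem_univ, true_and, Prod.mk.injEq] at hπ ⊢
    obtain ⟨h1, h2, h3, h4⟩ := hπ
    simp [Equiv.Perm.mul_apply, h1, h2, h3, h4]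
  · intro π hπ
    simp only [mem_filter, mem_univ, true_and, Prod.mk.injEq] at hπ ⊢
    obtain ⟨h1, h2, h3, h4⟩ := hπ
    simp [Equiv.Perm.mul_apply, h1, h2, h3, h4]
  · intro π _; simp [mul_assoc, ← mul_assoc]
  · intro π _; simp [mul_assoc, ← mul_assoc]

lemma perm_sum_reduce (u v w x : Fin n) (huv : u ≠ v) (huw : u ≠ w) (hux : u ≠ x)
    (hvw : v ≠ w) (hvx : v ≠ x) (hwx : w ≠ x) (g : Fin n × Fin n × Fin n × Fin n → ℚ) :
    ∑ π : Equiv.Perm (Fin n), g (π u, π v, π w, π x)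
    = ((univ.filter fun π : Equiv.Perm (Fin n) =>
          (π u, π v, π w, π x) = (u, v, w, x)).card : ℚ)
      * ∑ t ∈ (univ.filter fun t : Fin n × Fin n × Fin n × Fin n =>
          t.1 ≠ t.2.1 ∧ t.1 ≠ t.2.2.1 ∧ t.1 ≠ t.2.2.2 ∧ t.2.1 ≠ t.2.2.1 ∧
          t.2.1 ≠ t.2.2.2 ∧ t.2.2.1 ≠ t.2.2.2), g t := by
  classical
  set c := (univ.filter fun π : Equiv.Perm (Fin n) =>
      (π u, π v, π w, π x) = (u, v, w, x)).card with hc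
  set P : Fin n × Fin n × Fin n × Fin n → Prop := fun t =>
    t.1 ≠ t.2.1 ∧ t.1 ≠ t.2.2.1 ∧ t.1 ≠ t.2.2.2 ∧ t.2.1 ≠ t.2.2.1 ∧
    t.2.1 ≠ t.2.2.2 ∧ t.2.2.1 ≠ t.2.2.2 with hP
  rw [← Finset.sum_fiberwise univ (fun π : Equiv.Perm (Fin n) => (π u, π v, π w, π x))
    (fun π => g (π u, π v, π w, π x))]
  have step : ∀ t : Fin n × Fin n × Fin n × Fin n,
      ∑ π ∈ univ.filter (fun π : Equiv.Perm (Fin n) => (π u, π v, π w, π x) = t),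
        g (π u, π v, π w, π x)
      = if P t then (c : ℚ) * g t else 0 := by
    intro t
    by_cases hPt : P t
    · rw [if_pos hPt]
      obtain ⟨h1, h2, h3, h4, h5, h6⟩ := hPt
      have hext : ∃ π : Equiv.Perm (Fin n), (π u, π v, π w, π x) = t := by
        obtain ⟨π, ha, hb, hcc, hd⟩ := exists_perm_extend u v w x huv huw hux hvw hvx hwx
          t.1 t.2.1 t.2.2.1 t.2.2.2 h1 h2 h3 h4 h5 h6
        exact ⟨π, by rw [ha, hb, hcc, hd]⟩
      have hcard : (univ.filter fun π : Equiv.Perm (Fin n) =>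
          (π u, π v, π w, π x) = t).card = c := by
        rw [hc]
        exact fiber_card_eq u v w x t (u, v, w, x) hext ⟨1, rfl⟩
      calc ∑ π ∈ univ.filter (fun π : Equiv.Perm (Fin n) => (π u, π v, π w, π x) = t),
            g (π u, π v, π w, π x)
          = ∑ π ∈ univ.filter (fun π : Equiv.Perm (Fin n) => (π u, π v, π w, π x) = t),
            g t := by
            refine Finset.sum_congr rfl fun π hπ => ?_
            rw [(mem_filter.mp hπ).2]
        _ = (c : ℚ) * g t := by rw [Finset.sum_const, hcard, nsmul_eq_mul]
    · rw [if_neg hPt]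
      have : (univ.filter fun π : Equiv.Perm (Fin n) => (π u, π v, π w, π x) = t) = ∅ := by
        refine Finset.filter_eq_empty_iff.mpr fun π _ => ?_
        intro hEq
        apply hPt
        rw [← hEq]
        exact ⟨π.injective.ne huv, π.injective.ne huw, π.injective.ne hux,
          π.injective.ne hvw, π.injective.ne hvx, π.injective.ne hwx⟩
      rw [this, Finset.sum_empty]
  rw [Finset.sum_congr rfl fun t _ => step t]
  rw [← Finset.sum_filter, Finset.mul_sum]

end

lemma card_distinct (n : ℕ) :
    (univ.filter fun t : Fin n × Fin n × Fin n × Fin n =>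
      t.1 ≠ t.2.1 ∧ t.1 ≠ t.2.2.1 ∧ t.1 ≠ t.2.2.2 ∧ t.2.1 ≠ t.2.2.1 ∧
      t.2.1 ≠ t.2.2.2 ∧ t.2.2.1 ≠ t.2.2.2).card = n.descFactorial 4 := by
  rw [← Fintype.card_subtype]
  have : Fintype.card (Fin 4 ↪ Fin n) = n.descFactorial 4 := by
    rw [Fintype.card_embedding_eq, Fintype.card_fin, Fintype.card_fin]
  rw [← this]
  refine Fintype.card_congr ⟨fun t => ⟨![t.1.1, t.1.2.1, t.1.2.2.1, t.1.2.2.2], ?_⟩,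
    fun f => ⟨(f 0, f 1, f 2, f 3), f.injective.ne (by decide), f.injective.ne (by decide),
      f.injective.ne (by decide), f.injective.ne (by decide), f.injective.ne (by decide),
      f.injective.ne (by decide)⟩, ?_, ?_⟩
  · obtain ⟨⟨a, b, c, d⟩, h1, h2, h3, h4, h5, h6⟩ := t
    intro i j hij
    fin_cases i <;> fin_cases j <;> dsimp only at * <;> simp_all
  · rintro ⟨⟨a, b, c, d⟩, h⟩
    rfl
  · intro f
    ext i
    fin_cases i <;> rfl

lemma Sval (n : ℕ) :
    ∑ t ∈ (univ.filter fun t : Fin n × Fin n × Fin n × Fin n =>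
        t.1 ≠ t.2.1 ∧ t.1 ≠ t.2.2.1 ∧ t.1 ≠ t.2.2.2 ∧ t.2.1 ≠ t.2.2.1 ∧
        t.2.1 ≠ t.2.2.2 ∧ t.2.2.1 ≠ t.2.2.2),
      |((t.1 : ℕ) : ℚ) - ((t.2.1 : ℕ) : ℚ)| * |((t.2.2.1 : ℕ) : ℚ) - ((t.2.2.2 : ℕ) : ℚ)|
    = (((n:ℚ)+1) * (5*(n:ℚ)+4) / 45) * ((n:ℚ)*((n:ℚ)-1)*((n:ℚ)-2)*((n:ℚ)-3)) := by
  rw [sum_distinct (fun a b : Fin n => |((a : ℕ) : ℚ) - ((b : ℕ) : ℚ)|)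
    (fun a => by simp) (fun a b => abs_sub_comm _ _)]
  have e1 : ∀ m : ℕ, (∑ b : Fin n, |(m:ℚ) - ((b : ℕ) : ℚ)|)
      = ∑ j ∈ range n, |(m:ℚ) - (j:ℚ)| :=
    fun m => Fin.sum_univ_eq_sum_range (fun j => |(m:ℚ) - (j:ℚ)|) n
  have e2 : ∀ m : ℕ, (∑ b : Fin n, |(m:ℚ) - ((b : ℕ) : ℚ)|^2)
      = ∑ j ∈ range n, ((m:ℚ) - (j:ℚ))^2 := by
    intro m
    rw [Fin.sum_univ_eq_sum_range (fun j => |(m:ℚ) - (j:ℚ)|^2) n]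
    exact Finset.sum_congr rfl fun j _ => sq_abs _
  simp only [e1, e2]
  rw [Fin.sum_univ_eq_sum_range (fun i => ∑ j ∈ range n, |(i:ℚ) - (j:ℚ)|) n,
      Fin.sum_univ_eq_sum_range (fun i => (∑ j ∈ range n, |(i:ℚ) - (j:ℚ)|)^2) n,
      Fin.sum_univ_eq_sum_range (fun i => ∑ j ∈ range n, ((i:ℚ) - (j:ℚ))^2) n,
      Aclosed, Bclosed, Cclosed]
  ring

/-- For four distinct vertices `u, v, w, x` in a uniformly random linear arrangement of
`n ≥ 4` positions, with `d_i, d_j` the lengths of the two disjoint edges `{u,v}` and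
`{w,x}`, one has `E[d_i d_j] = (n+1)(5n+4)/45`. -/
theorem expected_product_disjoint_edges (n : ℕ) (hn : 4 ≤ n) (u v w x : Fin n)
    (huv : u ≠ v) (huw : u ≠ w) (hux : u ≠ x) (hvw : v ≠ w) (hvx : v ≠ x)
    (hwx : w ≠ x) :
    (∑ π : Equiv.Perm (Fin n),
        |((π u : ℕ) : ℚ) - ((π v : ℕ) : ℚ)| * |((π w : ℕ) : ℚ) - ((π x : ℕ) : ℚ)|)
      / (Nat.factorial n : ℚ)
      = ((n : ℚ) + 1) * (5 * (n : ℚ) + 4) / 45 := by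
  classical
  set c := (univ.filter fun π : Equiv.Perm (Fin n) =>
      (π u, π v, π w, π x) = (u, v, w, x)).card with hcdef
  have hred : (∑ π : Equiv.Perm (Fin n),
        |((π u : ℕ) : ℚ) - ((π v : ℕ) : ℚ)| * |((π w : ℕ) : ℚ) - ((π x : ℕ) : ℚ)|)
      = (c : ℚ) * ∑ t ∈ (univ.filter fun t : Fin n × Fin n × Fin n × Fin n =>
          t.1 ≠ t.2.1 ∧ t.1 ≠ t.2.2.1 ∧ t.1 ≠ t.2.2.2 ∧ t.2.1 ≠ t.2.2.1 ∧
          t.2.1 ≠ t.2.2.2 ∧ t.2.2.1 ≠ t.2.2.2),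
        |((t.1 : ℕ) : ℚ) - ((t.2.1 : ℕ) : ℚ)| *
          |((t.2.2.1 : ℕ) : ℚ) - ((t.2.2.2 : ℕ) : ℚ)| :=
    perm_sum_reduce u v w x huv huw hux hvw hvx hwx
      (fun t => |((t.1 : ℕ) : ℚ) - ((t.2.1 : ℕ) : ℚ)| *
        |((t.2.2.1 : ℕ) : ℚ) - ((t.2.2.2 : ℕ) : ℚ)|)
  have hcount : (∑ _π : Equiv.Perm (Fin n), (1:ℚ))
      = (c : ℚ) * ∑ _t ∈ (univ.filter fun t : Fin n × Fin n × Fin n × Fin n =>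
          t.1 ≠ t.2.1 ∧ t.1 ≠ t.2.2.1 ∧ t.1 ≠ t.2.2.2 ∧ t.2.1 ≠ t.2.2.1 ∧
          t.2.1 ≠ t.2.2.2 ∧ t.2.2.1 ≠ t.2.2.2), (1:ℚ) :=
    perm_sum_reduce u v w x huv huw hux hvw hvx hwx (fun _ => (1:ℚ))
  have hNq : ((n.descFactorial 4 : ℕ) : ℚ)
      = (n:ℚ)*((n:ℚ)-1)*((n:ℚ)-2)*((n:ℚ)-3) := by
    obtain ⟨m, rfl⟩ : ∃ m, n = m + 4 := ⟨n - 4, by omega⟩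
    simp [Nat.descFactorial]
    push_cast
    ring
  have hFact : (Nat.factorial n : ℚ)
      = (c : ℚ) * ((n:ℚ)*((n:ℚ)-1)*((n:ℚ)-2)*((n:ℚ)-3)) := by
    rw [← hNq]
    have h1 : (∑ _π : Equiv.Perm (Fin n), (1:ℚ)) = (Nat.factorial n : ℚ) := by
      rw [Finset.sum_const, Finset.card_univ, Fintype.card_perm, Fintype.card_fin,
        nsmul_eq_mul, mul_one]
    have h2 : (∑ _t ∈ (univ.filter fun t : Fin n × Fin n × Fin n × Fin n =>
          t.1 ≠ t.2.1 ∧ t.1 ≠ t.2.2.1 ∧ t.1 ≠ t.2.2.2 ∧ t.2.1 ≠ t.2.2.1 ∧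
          t.2.1 ≠ t.2.2.2 ∧ t.2.2.1 ≠ t.2.2.2), (1:ℚ))
        = ((n.descFactorial 4 : ℕ) : ℚ) := by
      rw [Finset.sum_const, card_distinct, nsmul_eq_mul, mul_one]
    rw [← h1, hcount, h2]
  have hc0 : (c : ℚ) ≠ 0 := by
    have : (1 : Equiv.Perm (Fin n)) ∈ (univ.filter fun π : Equiv.Perm (Fin n) =>
        (π u, π v, π w, π x) = (u, v, w, x)) := by
      simp
    have := Finset.card_ne_zero_of_mem this
    exact_mod_cast this
  have hN0 : (n:ℚ)*((n:ℚ)-1)*((n:ℚ)-2)*((n:ℚ)-3) ≠ 0 := by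
    have h4 : (4:ℚ) ≤ (n:ℚ) := by exact_mod_cast hn
    have l1 : (n:ℚ) ≠ 0 := by linarith
    have l2 : (n:ℚ)-1 ≠ 0 := by intro h; nlinarith
    have l3 : (n:ℚ)-2 ≠ 0 := by intro h; nlinarith
    have l4 : (n:ℚ)-3 ≠ 0 := by intro h; nlinarith
    exact mul_ne_zero (mul_ne_zero (mul_ne_zero l1 l2) l3) l4
  rw [hred, Sval n, hFact]
  rw [mul_comm (((n:ℚ)+1) * (5*(n:ℚ)+4) / 45)
    ((n:ℚ)*((n:ℚ)-1)*((n:ℚ)-2)*((n:ℚ)-3))]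
  rw [mul_div_mul_left _ _ hc0]
  rw [mul_comm, mul_div_assoc, div_self hN0, mul_one]
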